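/- arXiv:2310.02244 — 5 statements merged into one kernel-verified Lean document; each statement's English description precedes it below -/
import Mathlib

section
/- Let L be a positive integer and W_1, …, W_L i.i.d. standard Gaussian (mean 0, variance 1) random variables. Fix reals x₀ ≠ 0, V, y with (V·x₀, y) ≠ (0, 0), and define δx^L := V·x₀·Π_{k=1}^{L}(1 + W_k/√L) − y and A_L := (1/√L)·δx^L·x₀²·Σ_{l=1}^{L} Π_{k≠l}(1 + W_k/√L)². Then E[A_L²] = Θ(L): there exist constants 0 < K₁ ≤ K₂ (depending on x₀, V, y but not on L) and L₀ such that K₁·L ≤ E[A_L²] ≤ K₂·L for all L ≥ L₀. Consequently, for a learning rate η, E[((η/√L)·A_L)²] = Θ(η²), so η = Θ(1) in L is the maximal learning rate scaling for which the one-step SGD update of the network output stays bounded as L → ∞. -/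
open MeasureTheory ProbabilityTheory Finset

/-- The joint law of `L` i.i.d. standard Gaussian random variables `W_1, …, W_L`,
realized canonically on `Fin L → ℝ`. -/
noncomputable def stdGaussPi (L : ℕ) : Measure (Fin L → ℝ) :=
  Measure.pi fun _ => gaussianReal 0 1

/-- `A_L = (1/√L) · δx^L · x₀² · ∑_{l=1}^{L} ∏_{k≠l} (1 + W_k/√L)²`, where
`δx^L = V·x₀·∏_{k=1}^{L}(1 + W_k/√L) − y`. -/
noncomputable def ALin (x₀ V y : ℝ) (L : ℕ) (ω : Fin L → ℝ) : ℝ :=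
  (1 / Real.sqrt L) * (V * x₀ * (∏ k, (1 + ω k / Real.sqrt L)) - y) * x₀ ^ 2 *
    ∑ l, ∏ k ∈ Finset.univ.erase l, (1 + ω k / Real.sqrt L) ^ 2

/-!
Write `u = V x₀`, `P = ∏ₖ (1 + W_k/√L)` and `Q_l = ∏_{k ≠ l} (1 + W_k/√L)²`, so that
`E[A_L²] = (x₀⁴/L) ∑_{l,l'} E[(uP - y)² Q_l Q_l']`. After expanding `(uP - y)²`, independence
turns each `E[P^p Q_l Q_l']` into a product of the moments `m_j = E(1 + W/√L)^j`:
`m_p m_{p+4}^{L-1}` for the `L` diagonal terms, `m_{p+2}² m_{p+4}^{L-2}` for the `L(L-1)` others.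
Only `E W = 0` and `E W² = 1` matter: they give `L (m_j - 1) → C(j,2)`, hence
`m_j^{L-c} → e^{C(j,2)}`, so `E[A_L²]/L → x₀⁴ (u² e¹⁵ - 2uy e¹⁰ + y² e⁶)`. This quadratic form
is positive definite because `(e¹⁰)² < e¹⁵ e⁶`, and the two-sided bounds follow; the
learning-rate statement is the same bound rescaled by `η²/L`.
-/

open Real Filter Topology

theorem tendsto_one_of_tendsto_natCast_mul_sub_one {g : ℕ → ℝ} {t : ℝ}
    (hg : Tendsto (fun n : ℕ ↦ n * (g n - 1)) atTop (𝓝 t)) : Tendsto g atTop (𝓝 1) := by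
  have h := (hg.mul tendsto_inv_atTop_nhds_zero_nat).const_add 1
  rw [mul_zero, add_zero] at h
  refine h.congr' ?_
  filter_upwards [eventually_ne_atTop 0] with n hn
  field_simp
  ring

theorem Real.tendsto_pow_sub_exp_of_tendsto {g : ℕ → ℝ} {t : ℝ} (c : ℕ)
    (hg : Tendsto (fun n : ℕ ↦ n * (g n - 1)) atTop (𝓝 t)) :
    Tendsto (fun n : ℕ ↦ g n ^ (n - c)) atTop (𝓝 (exp t)) := by
  have hg_one := tendsto_one_of_tendsto_natCast_mul_sub_one hg
  have hpow : Tendsto (fun n : ℕ ↦ g n ^ n) atTop (𝓝 (exp t)) := by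
    simpa using Real.tendsto_one_add_pow_exp_of_tendsto hg
  have h := hpow.div (hg_one.pow c) (by simp)
  rw [one_pow, div_one] at h
  refine h.congr' ?_
  filter_upwards [eventually_ge_atTop c, hg_one.eventually_ne one_ne_zero] with n hn hgn
  exact (pow_sub₀ _ hgn hn).symm

theorem Finset.prod_ite_mem_const {ι M : Type*} [Fintype ι] [DecidableEq ι] [CommMonoid M]
    (s : Finset ι) (a b : M) :
    ∏ i, (if i ∈ s then a else b) = a ^ #s * b ^ (Fintype.card ι - #s) := by
  rw [prod_ite, prod_const, prod_const, filter_mem_eq_inter, univ_inter, filter_not,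
    filter_mem_eq_inter, univ_inter, card_univ_sdiff]

theorem one_add_div_pow_eq_sum (x a : ℝ) (j : ℕ) :
    (1 + x / a) ^ j = ∑ i ∈ range (j + 1), j.choose i * a⁻¹ ^ i * x ^ i := by
  rw [add_comm, add_pow]
  refine sum_congr rfl fun i _ ↦ ?_
  rw [div_eq_mul_inv, mul_pow]
  ring

theorem sum_sum_ite_eq {ι R : Type*} [Fintype ι] [DecidableEq ι] [CommRing R] (a b : R) :
    ∑ i : ι, ∑ j : ι, (if i = j then a else b) =
      Fintype.card ι * (a + (Fintype.card ι - 1) * b) := by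
  have h : ∀ i j : ι, (if i = j then a else b) = (if i = j then a - b else 0) + b := by
    intro i j
    split_ifs <;> ring
  simp only [h, sum_add_distrib, sum_ite_eq, mem_univ, if_true, sum_const, card_univ,
    nsmul_eq_mul]
  ring

theorem prod_erase_sq_eq_prod_pow_ite {ι M : Type*} [Fintype ι] [DecidableEq ι] [CommMonoid M]
    (f : ι → M) (l : ι) : ∏ k ∈ univ.erase l, f k ^ 2 = ∏ k, f k ^ (if k = l then 0 else 2) := by
  rw [← mul_prod_erase univ _ (mem_univ l), if_pos rfl, pow_zero, one_mul]
  exact prod_congr rfl fun k hk ↦ by rw [if_neg (ne_of_mem_erase hk)]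

structure HasStandardMoments (μ : Measure ℝ) : Prop where
  integrable_pow : ∀ n : ℕ, Integrable (fun x ↦ x ^ n) μ
  integral_id : ∫ x, x ∂μ = 0
  integral_sq : ∫ x, x ^ 2 ∂μ = 1

section Moments

variable {μ : Measure ℝ}

theorem integrable_one_add_div_pow (hμ : ∀ n : ℕ, Integrable (fun x ↦ x ^ n) μ) (a : ℝ)
    (j : ℕ) : Integrable (fun x ↦ (1 + x / a) ^ j) μ := by
  simp_rw [one_add_div_pow_eq_sum]
  exact integrable_finsetSum _ fun i _ ↦ (hμ i).const_mul _

theorem integral_one_add_div_pow (hμ : ∀ n : ℕ, Integrable (fun x ↦ x ^ n) μ) (a : ℝ) (j : ℕ) :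
    ∫ x, (1 + x / a) ^ j ∂μ = ∑ i ∈ range (j + 1), j.choose i * a⁻¹ ^ i * ∫ x, x ^ i ∂μ := by
  simp_rw [one_add_div_pow_eq_sum]
  rw [integral_finsetSum _ fun i _ ↦ (hμ i).const_mul _]
  simp_rw [integral_const_mul]

theorem tendsto_natCast_mul_integral_one_add_div_sqrt_pow_sub_one [IsProbabilityMeasure μ]
    (hμ : HasStandardMoments μ) (j : ℕ) :
    Tendsto (fun L : ℕ ↦ (L : ℝ) * (∫ x, (1 + x / √L) ^ j ∂μ - 1)) atTop
      (𝓝 (j.choose 2)) := by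
  set M : ℕ → ℝ := fun i ↦ ∫ x, x ^ i ∂μ
  -- With `s = 1/√L`, `L * (E(1 + sX)^j - 1) = F s` for a polynomial `F`: the term linear in `s`
  -- vanishes because `E X = 0`.
  set F : ℝ → ℝ := fun s ↦ ∑ i ∈ range j, j.choose (i + 1) * M (i + 1) * s ^ (i - 1)
  have hF0 : F 0 = j.choose 2 := by
    simp only [F]
    rw [sum_eq_single 1]
    · simp [M, hμ.integral_sq]
    · intro i _ hi
      rcases Nat.lt_or_gt_of_ne hi with h | h
      · obtain rfl : i = 0 := by omega
        simp [M, hμ.integral_id]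
      · simp [zero_pow (by omega : i - 1 ≠ 0)]
    · intro h
      simp [Nat.choose_eq_zero_of_lt (by simpa using h : j < 2)]
  have hs : Tendsto (fun L : ℕ ↦ (√L)⁻¹) atTop (𝓝 0) :=
    (tendsto_inv_atTop_zero.comp tendsto_sqrt_atTop).comp tendsto_natCast_atTop_atTop
  have hF : Continuous F := by fun_prop
  rw [← hF0]
  refine ((hF.tendsto 0).comp hs).congr' ?_
  filter_upwards [eventually_ne_atTop 0] with L hL
  have hLs : (L : ℝ) * (√L)⁻¹ ^ 2 = 1 := by
    rw [inv_pow, sq_sqrt (Nat.cast_nonneg L)]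
    exact mul_inv_cancel₀ (Nat.cast_ne_zero.2 hL)
  rw [integral_one_add_div_pow hμ.integrable_pow, sum_range_succ', Function.comp_apply]
  simp only [Nat.choose_zero_right, pow_zero, integral_const, probReal_univ,
    smul_eq_mul, mul_one, Nat.cast_one, add_sub_cancel_right, mul_sum, F]
  refine sum_congr rfl fun i _ ↦ ?_
  rcases Nat.eq_zero_or_pos i with rfl | hi
  · simp [M, hμ.integral_id]
  · calc (j.choose (i + 1) * M (i + 1) * (√L)⁻¹ ^ (i - 1) : ℝ)
        = j.choose (i + 1) * M (i + 1) * (√L)⁻¹ ^ (i - 1) * ((L : ℝ) * (√L)⁻¹ ^ 2) := by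
          rw [hLs, mul_one]
      _ = (L : ℝ) * (j.choose (i + 1) * (√L)⁻¹ ^ (i + 1) * M (i + 1)) := by
          rw [show i + 1 = i - 1 + 2 by omega, pow_add]
          ring

end Moments

theorem hasStandardMoments_gaussianReal : HasStandardMoments (gaussianReal 0 1) where
  integrable_pow n := (memLp_id_gaussianReal n).integrable_norm_pow'.mono' (by fun_prop)
    (ae_of_all _ fun x ↦ by simp [norm_pow])
  integral_id := integral_id_gaussianReal
  integral_sq := by
    rw [← variance_of_integral_eq_zero aemeasurable_id' integral_id_gaussianReal,
      variance_fun_id_gaussianReal, NNReal.coe_one]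

section LayerMoments

variable (μ : Measure ℝ)

noncomputable def layerMoment (L j : ℕ) : ℝ := ∫ x, (1 + x / √L) ^ j ∂μ

noncomputable def diagMoment (L p : ℕ) : ℝ :=
  layerMoment μ L p * layerMoment μ L (p + 4) ^ (L - 1)

noncomputable def offDiagMoment (L p : ℕ) : ℝ :=
  layerMoment μ L (p + 2) ^ 2 * layerMoment μ L (p + 4) ^ (L - 2)

variable {μ} [IsProbabilityMeasure μ]

theorem tendsto_layerMoment (hμ : HasStandardMoments μ) (j : ℕ) :
    Tendsto (layerMoment μ · j) atTop (𝓝 1) :=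
  tendsto_one_of_tendsto_natCast_mul_sub_one
    (tendsto_natCast_mul_integral_one_add_div_sqrt_pow_sub_one hμ j)

theorem tendsto_layerMoment_pow_sub (hμ : HasStandardMoments μ) (j c : ℕ) :
    Tendsto (fun L ↦ layerMoment μ L j ^ (L - c)) atTop (𝓝 (exp (j.choose 2))) :=
  Real.tendsto_pow_sub_exp_of_tendsto c
    (tendsto_natCast_mul_integral_one_add_div_sqrt_pow_sub_one hμ j)

theorem tendsto_diagMoment (hμ : HasStandardMoments μ) (p : ℕ) :
    Tendsto (diagMoment μ · p) atTop (𝓝 (exp ((p + 4).choose 2))) := by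
  simpa [diagMoment] using (tendsto_layerMoment hμ p).mul
    (tendsto_layerMoment_pow_sub hμ (p + 4) 1)

theorem tendsto_offDiagMoment (hμ : HasStandardMoments μ) (p : ℕ) :
    Tendsto (offDiagMoment μ · p) atTop (𝓝 (exp ((p + 4).choose 2))) := by
  simpa [offDiagMoment] using ((tendsto_layerMoment hμ (p + 2)).pow 2).mul
    (tendsto_layerMoment_pow_sub hμ (p + 4) 2)

end LayerMoments

section PairTerms

variable {L : ℕ}

noncomputable def pairTerm (p : ℕ) (l l' : Fin L) (ω : Fin L → ℝ) : ℝ :=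
  (∏ k, (1 + ω k / √L)) ^ p * (∏ k ∈ univ.erase l, (1 + ω k / √L) ^ 2) *
    ∏ k ∈ univ.erase l', (1 + ω k / √L) ^ 2

theorem pairTerm_eq_prod_pow (p : ℕ) (l l' : Fin L) (ω : Fin L → ℝ) :
    pairTerm p l l' ω = ∏ k, (1 + ω k / √L) ^
      (p + (if k = l then 0 else 2) + (if k = l' then 0 else 2)) := by
  rw [pairTerm, prod_erase_sq_eq_prod_pow_ite, prod_erase_sq_eq_prod_pow_ite, ← prod_pow,
    ← prod_mul_distrib, ← prod_mul_distrib]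
  simp only [pow_add]

variable {μ : Measure ℝ} [IsProbabilityMeasure μ]

theorem integrable_pairTerm (hμ : HasStandardMoments μ) (p : ℕ) (l l' : Fin L) :
    Integrable (pairTerm p l l') (Measure.pi fun _ ↦ μ) := by
  simp_rw [funext (pairTerm_eq_prod_pow p l l')]
  exact Integrable.fintype_prod fun k ↦ integrable_one_add_div_pow hμ.integrable_pow _ _

theorem integral_prod_pow_eq_prod_layerMoment (e : Fin L → ℕ) :
    ∫ ω, ∏ k, (1 + ω k / √L) ^ e k ∂(Measure.pi fun _ ↦ μ) = ∏ k, layerMoment μ L (e k) :=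
  integral_fintype_prod_eq_prod fun k x ↦ (1 + x / √L) ^ e k

theorem integral_pairTerm (p : ℕ) (l l' : Fin L) :
    ∫ ω, pairTerm p l l' ω ∂(Measure.pi fun _ ↦ μ) =
      if l = l' then diagMoment μ L p else offDiagMoment μ L p := by
  simp_rw [pairTerm_eq_prod_pow, integral_prod_pow_eq_prod_layerMoment]
  rcases eq_or_ne l l' with rfl | hne
  · calc ∏ k, layerMoment μ L (p + (if k = l then 0 else 2) + (if k = l then 0 else 2))
        = ∏ k, if k ∈ ({l} : Finset (Fin L)) then layerMoment μ L p
            else layerMoment μ L (p + 4) :=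
          prod_congr rfl fun k _ ↦ by by_cases hk : k = l <;> simp [hk, add_assoc]
      _ = _ := by
          rw [prod_ite_mem_const, card_singleton, pow_one, Fintype.card_fin, if_pos rfl,
            diagMoment]
  · calc ∏ k, layerMoment μ L (p + (if k = l then 0 else 2) + (if k = l' then 0 else 2))
        = ∏ k, if k ∈ ({l, l'} : Finset (Fin L)) then layerMoment μ L (p + 2)
            else layerMoment μ L (p + 4) :=
          prod_congr rfl fun k _ ↦ by
            by_cases hk : k = l <;> by_cases hk' : k = l' <;> simp_all [add_assoc]
      _ = _ := by
          rw [prod_ite_mem_const, card_pair hne, Fintype.card_fin, if_neg hne, offDiagMoment]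

end PairTerms

/-- If `f p = E[P ^ p * R]`, then `sqResidual u y f = E[(u * P - y) ^ 2 * R]`. -/
def sqResidual (u y : ℝ) (f : ℕ → ℝ) : ℝ := u ^ 2 * f 2 - 2 * u * y * f 1 + y ^ 2 * f 0

theorem integrable_sqResidual {Ω : Type*} [MeasurableSpace Ω] {ν : Measure Ω} (u y : ℝ)
    {F : ℕ → Ω → ℝ} (hF : ∀ p, Integrable (F p) ν) :
    Integrable (fun ω ↦ sqResidual u y (F · ω)) ν :=
  (((hF 2).const_mul _).sub ((hF 1).const_mul _)).add ((hF 0).const_mul _)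

theorem integral_sqResidual {Ω : Type*} [MeasurableSpace Ω] {ν : Measure Ω} (u y : ℝ)
    {F : ℕ → Ω → ℝ} (hF : ∀ p, Integrable (F p) ν) :
    ∫ ω, sqResidual u y (F · ω) ∂ν = sqResidual u y fun p ↦ ∫ ω, F p ω ∂ν := by
  have hint : ∀ p c, Integrable (fun ω ↦ c * F p ω) ν := fun p c ↦ (hF p).const_mul c
  simp only [sqResidual]
  rw [integral_add _ (hint 0 _), integral_sub (hint 2 _) (hint 1 _)]
  · simp only [integral_const_mul]
  · exact (hint 2 _).sub (hint 1 _)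

theorem Filter.Tendsto.sqResidual {α : Type*} {l : Filter α} {f : α → ℕ → ℝ} {g : ℕ → ℝ}
    (u y : ℝ) (h : ∀ p, Tendsto (f · p) l (𝓝 (g p))) :
    Tendsto (fun a ↦ sqResidual u y (f a)) l (𝓝 (sqResidual u y g)) :=
  (((h 2).const_mul _).sub ((h 1).const_mul _)).add ((h 0).const_mul _)

theorem sqResidual_pos {f : ℕ → ℝ} {u y : ℝ} (hf : 0 < f 2) (hdisc : f 1 ^ 2 < f 2 * f 0)
    (huy : (u, y) ≠ (0, 0)) : 0 < sqResidual u y f := by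
  rw [sqResidual]
  rcases eq_or_ne y 0 with rfl | hy
  · have hu : u ≠ 0 := fun hu ↦ huy (by rw [hu])
    simpa using mul_pos (pow_pos (abs_pos.2 hu) 2) hf
  · nlinarith [sq_nonneg (f 2 * u - f 1 * y), sq_pos_of_ne_zero hy]

theorem sqResidual_exp_choose_pos {u y : ℝ} (huy : (u, y) ≠ (0, 0)) :
    0 < sqResidual u y fun p ↦ exp ((p + 4).choose 2) := by
  refine sqResidual_pos (exp_pos _) ?_ huy
  rw [sq, ← exp_add, ← exp_add, exp_lt_exp]
  norm_num [Nat.choose]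

section ALin

variable (x₀ V y : ℝ) {L : ℕ}

theorem ALin_sq_eq (ω : Fin L → ℝ) :
    ALin x₀ V y L ω ^ 2 = x₀ ^ 4 / L * ∑ l, ∑ l', sqResidual (V * x₀) y (pairTerm · l l' ω) := by
  set P := ∏ k, (1 + ω k / √L)
  set S := ∑ l, ∏ k ∈ univ.erase l, (1 + ω k / √L) ^ 2
  have hsum : ∑ l, ∑ l', sqResidual (V * x₀) y (pairTerm · l l' ω) =
      (V * x₀ * P - y) ^ 2 * (S * S) := by
    rw [sum_mul_sum, mul_sum]
    refine sum_congr rfl fun l _ ↦ ?_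
    rw [mul_sum]
    refine sum_congr rfl fun l' _ ↦ ?_
    simp only [sqResidual, pairTerm]
    ring
  have hscale : (1 / √L) ^ 2 = 1 / (L : ℝ) := by
    rw [div_pow, one_pow, sq_sqrt (Nat.cast_nonneg L)]
  rw [hsum, ALin]
  linear_combination ((V * x₀ * P - y) ^ 2 * x₀ ^ 4 * S ^ 2) * hscale

variable {μ : Measure ℝ} [IsProbabilityMeasure μ]

theorem integral_ALin_sq (hμ : HasStandardMoments μ) (hL : L ≠ 0) :
    ∫ ω, ALin x₀ V y L ω ^ 2 ∂(Measure.pi fun _ ↦ μ) =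
      x₀ ^ 4 * (sqResidual (V * x₀) y (diagMoment μ L) +
        (L - 1) * sqResidual (V * x₀) y (offDiagMoment μ L)) := by
  have hint : ∀ l l' : Fin L, Integrable (fun ω ↦ sqResidual (V * x₀) y (pairTerm · l l' ω))
      (Measure.pi fun _ ↦ μ) :=
    fun l l' ↦ integrable_sqResidual _ _ fun p ↦ integrable_pairTerm hμ p l l'
  have hterm : ∀ l l' : Fin L,
      ∫ ω, sqResidual (V * x₀) y (pairTerm · l l' ω) ∂(Measure.pi fun _ ↦ μ) =
        if l = l' then sqResidual (V * x₀) y (diagMoment μ L)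
        else sqResidual (V * x₀) y (offDiagMoment μ L) := by
    intro l l'
    rw [integral_sqResidual _ _ fun p ↦ integrable_pairTerm hμ p l l']
    simp_rw [integral_pairTerm]
    split_ifs <;> rfl
  simp_rw [ALin_sq_eq]
  rw [integral_const_mul,
    integral_finsetSum _ fun l _ ↦ integrable_finsetSum _ fun l' _ ↦ hint l l']
  simp_rw [integral_finsetSum _ fun l' _ ↦ hint _ l', hterm, sum_sum_ite_eq, Fintype.card_fin]
  field_simp

theorem tendsto_integral_ALin_sq_div (hμ : HasStandardMoments μ) :
    Tendsto (fun L : ℕ ↦ (∫ ω, ALin x₀ V y L ω ^ 2 ∂(Measure.pi fun _ ↦ μ)) / L) atTop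
      (𝓝 (x₀ ^ 4 * sqResidual (V * x₀) y fun p ↦ exp ((p + 4).choose 2))) := by
  have hD := Tendsto.sqResidual (V * x₀) y (tendsto_diagMoment hμ)
  have hO := Tendsto.sqResidual (V * x₀) y (tendsto_offDiagMoment hμ)
  have hinv := tendsto_inv_atTop_nhds_zero_nat (𝕜 := ℝ)
  have hone := tendsto_const_nhds (x := (1 : ℝ)) (f := atTop (α := ℕ))
  have h := ((hD.mul hinv).add ((hone.sub hinv).mul hO)).const_mul (x₀ ^ 4)
  rw [mul_zero, zero_add, sub_zero, one_mul] at h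
  refine h.congr' ?_
  filter_upwards [eventually_ne_atTop 0] with L hL
  rw [integral_ALin_sq x₀ V y hμ hL]
  field_simp

end ALin

theorem integral_div_sqrt_mul_sq {Ω : Type*} [MeasurableSpace Ω] (ν : Measure Ω) (f : Ω → ℝ)
    (η : ℝ) {a : ℝ} (ha : 0 ≤ a) :
    ∫ ω, (η / √a * f ω) ^ 2 ∂ν = η ^ 2 / a * ∫ ω, f ω ^ 2 ∂ν := by
  rw [← integral_const_mul]
  simp_rw [mul_pow, div_pow, sq_sqrt ha]

/-- `E[A_L²] = Θ(L)`, and consequently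
`E[((η/√L)·A_L)²] = Θ(η²)` for any learning rate `η`. -/
theorem stmt_1 (x₀ V y : ℝ) (hx₀ : x₀ ≠ 0) (hVy : (V * x₀, y) ≠ (0, 0)) :
    ∃ K₁ K₂ : ℝ, 0 < K₁ ∧ K₁ ≤ K₂ ∧ ∃ L₀ : ℕ,
      ∀ L : ℕ, L₀ ≤ L →
        (K₁ * L ≤ ∫ ω, (ALin x₀ V y L ω) ^ 2 ∂(stdGaussPi L)) ∧
        ((∫ ω, (ALin x₀ V y L ω) ^ 2 ∂(stdGaussPi L)) ≤ K₂ * L) ∧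
        ∀ η : ℝ,
          K₁ * η ^ 2 ≤ (∫ ω, ((η / Real.sqrt L) * ALin x₀ V y L ω) ^ 2 ∂(stdGaussPi L)) ∧
          (∫ ω, ((η / Real.sqrt L) * ALin x₀ V y L ω) ^ 2 ∂(stdGaussPi L)) ≤ K₂ * η ^ 2 := by
  set c := x₀ ^ 4 * sqResidual (V * x₀) y fun p ↦ exp ((p + 4).choose 2)
  have hc : 0 < c := mul_pos (by positivity) (sqResidual_exp_choose_pos hVy)
  have hlim := tendsto_integral_ALin_sq_div x₀ V y hasStandardMoments_gaussianReal
  obtain ⟨L₀, hL₀⟩ := ((hlim.eventually (Icc_mem_nhds (half_lt_self hc) (lt_two_mul_self hc))).and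
    (eventually_gt_atTop 0)).exists_forall_of_atTop
  refine ⟨c / 2, 2 * c, half_pos hc, by linarith, L₀, fun L hL ↦ ?_⟩
  obtain ⟨⟨hlow, hhigh⟩, hL_pos⟩ := hL₀ L hL
  have hL : (0 : ℝ) < L := Nat.cast_pos.2 hL_pos
  refine ⟨(le_div_iff₀ hL).1 hlow, (div_le_iff₀ hL).1 hhigh, fun η ↦ ?_⟩
  rw [integral_div_sqrt_mul_sq _ _ _ hL.le, div_mul_comm (η ^ 2)]
  exact ⟨mul_le_mul_of_nonneg_right hlow (sq_nonneg η),
    mul_le_mul_of_nonneg_right hhigh (sq_nonneg η)⟩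
end

section
/- Let L be a positive integer and W_1, …, W_L i.i.d. standard Gaussian (mean 0, variance 1) random variables, and let x₀ ≠ 0 be a real number. Then E[(x₀·Σ_{l=1}^{L} Π_{k≠l}(1 + W_k/√L))²] = Θ(L²): there exist constants 0 < K₁ ≤ K₂ (depending only on x₀) and L₀ such that K₁·L² ≤ E[(x₀·Σ_{l=1}^{L} Π_{k≠l}(1 + W_k/√L))²] ≤ K₂·L² for all L ≥ L₀. Consequently, for a learning rate η, the corresponding first-order one-step update term satisfies E[((η/√L)·Σ_{l=1}^{L} Π_{k≠l}(1 + W_k/√L)·x₀)²] = Θ(η²·L), so η = Θ(L^{−1/2}) is the maximal learning rate scaling for which it stays bounded as L → ∞. -/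
open MeasureTheory ProbabilityTheory Finset

section GaussianMoments

variable {v : NNReal}

lemma integrable_fun_id_gaussianReal (m : ℝ) : Integrable (fun x => x) (gaussianReal m v) :=
  (memLp_id_gaussianReal 1).integrable le_rfl

lemma integral_sq_gaussianReal (m : ℝ) : ∫ x, x ^ 2 ∂gaussianReal m v = m ^ 2 + v := by
  have h := variance_eq_sub (memLp_id_gaussianReal (μ := m) (v := v) 2)
  simp only [variance_id_gaussianReal, Pi.pow_apply, id, integral_id_gaussianReal] at h
  linarith

lemma memLp_one_add_div_gaussianReal (m a : ℝ) :
    MemLp (fun x => 1 + x / a) 2 (gaussianReal m v) :=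
  (memLp_const (1 : ℝ)).add ((memLp_id_gaussianReal 2).mul_const a⁻¹)

lemma integral_one_add_div_gaussianReal (a : ℝ) : ∫ x, (1 + x / a) ∂gaussianReal 0 v = 1 := by
  rw [integral_add (integrable_const _) ((integrable_fun_id_gaussianReal 0).div_const a),
    integral_div, integral_id_gaussianReal]
  simp

lemma integral_one_add_div_sq_gaussianReal (a : ℝ) :
    ∫ x, (1 + x / a) ^ 2 ∂gaussianReal 0 v = 1 + v / a ^ 2 := by
  have hlin : Integrable (fun x => 1 + 2 / a * x) (gaussianReal 0 v) :=
    (integrable_const _).add ((integrable_fun_id_gaussianReal 0).const_mul _)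
  have hsq : Integrable (fun x => x ^ 2 / a ^ 2) (gaussianReal 0 v) :=
    (memLp_id_gaussianReal 2).integrable_sq.div_const _
  have hexp : (fun x : ℝ => (1 + x / a) ^ 2) = fun x => (1 + 2 / a * x) + x ^ 2 / a ^ 2 := by
    funext x; ring
  rw [hexp, integral_add hlin hsq, integral_add (integrable_const _)
    ((integrable_fun_id_gaussianReal 0).const_mul _), integral_const_mul, integral_div,
    integral_id_gaussianReal, integral_sq_gaussianReal]
  simp

end GaussianMoments

def leaveOneOutSum {ι α : Type*} [Fintype ι] [DecidableEq ι] (f : α → ℝ) (ω : ι → α) : ℝ :=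
  ∑ l, ∏ k ∈ univ.erase l, f (ω k)

section LeaveOneOut

variable {ι α : Type*} [Fintype ι] [DecidableEq ι] [MeasurableSpace α]
  {μ : Measure α} [IsProbabilityMeasure μ] {f : α → ℝ}

lemma one_le_integral_sq_of_integral_eq_one (hf : MemLp f 2 μ) (hf1 : ∫ x, f x ∂μ = 1) :
    1 ≤ ∫ x, f x ^ 2 ∂μ := by
  have h := variance_nonneg f μ
  rw [variance_eq_sub hf, hf1] at h
  simpa using h

lemma prod_mul_prod_eq_prod_ite {M : Type*} [CommMonoid M] (s t : Finset ι) (F : ι → M) :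
    (∏ k ∈ s, F k) * ∏ k ∈ t, F k =
      ∏ k, (if k ∈ s then F k else 1) * (if k ∈ t then F k else 1) := by
  rw [prod_mul_distrib, prod_ite_mem, prod_ite_mem, univ_inter, univ_inter]

lemma integrable_pi_prod_mul_prod (hf : MemLp f 2 μ) (s t : Finset ι) :
    Integrable (fun ω => (∏ k ∈ s, f (ω k)) * ∏ k ∈ t, f (ω k)) (Measure.pi fun _ : ι => μ) := by
  simp_rw [prod_mul_prod_eq_prod_ite s t]
  refine Integrable.fintype_prod
    (f := fun k x => (if k ∈ s then f x else 1) * (if k ∈ t then f x else 1)) fun k => ?_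
  by_cases hs : k ∈ s <;> by_cases ht : k ∈ t
  · simpa [hs, ht, sq] using hf.integrable_sq
  all_goals simp [hs, ht, hf.integrable one_le_two]

lemma integral_pi_prod_mul_prod (hf1 : ∫ x, f x ∂μ = 1) (s t : Finset ι) :
    ∫ ω, (∏ k ∈ s, f (ω k)) * ∏ k ∈ t, f (ω k) ∂(Measure.pi fun _ : ι => μ) =
      (∫ x, f x ^ 2 ∂μ) ^ #(s ∩ t) := by
  simp_rw [prod_mul_prod_eq_prod_ite s t]
  rw [integral_fintype_prod_eq_prod
      (fun k x => (if k ∈ s then f x else 1) * (if k ∈ t then f x else 1)),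
    ← prod_const, ← univ_inter (s ∩ t), ← prod_ite_mem]
  refine prod_congr rfl fun k _ => ?_
  by_cases hs : k ∈ s <;> by_cases ht : k ∈ t <;> simp [hs, ht, hf1, sq]

lemma integral_leaveOneOutSum_sq (hf : MemLp f 2 μ) (hf1 : ∫ x, f x ∂μ = 1) :
    ∫ ω, leaveOneOutSum f ω ^ 2 ∂(Measure.pi fun _ : ι => μ) =
      ∑ l : ι, ∑ l' : ι, (∫ x, f x ^ 2 ∂μ) ^ #(univ.erase l ∩ univ.erase l') := by
  conv_lhs => enter [2, ω]; rw [leaveOneOutSum, sq, sum_mul_sum]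
  rw [integral_finsetSum univ fun l _ => integrable_finsetSum univ fun l' _ =>
    integrable_pi_prod_mul_prod hf _ _]
  refine sum_congr rfl fun l _ => ?_
  rw [integral_finsetSum univ fun l' _ => integrable_pi_prod_mul_prod hf _ _]
  exact sum_congr rfl fun l' _ => integral_pi_prod_mul_prod hf1 _ _

lemma card_sq_le_integral_leaveOneOutSum_sq (hf : MemLp f 2 μ) (hf1 : ∫ x, f x ∂μ = 1) :
    (Fintype.card ι : ℝ) ^ 2 ≤ ∫ ω, leaveOneOutSum f ω ^ 2 ∂(Measure.pi fun _ : ι => μ) := by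
  have hm := one_le_integral_sq_of_integral_eq_one hf hf1
  calc (Fintype.card ι : ℝ) ^ 2 = ∑ _l : ι, ∑ _l' : ι, (1 : ℝ) := by simp [sq]
    _ ≤ _ := by
      rw [integral_leaveOneOutSum_sq hf hf1]
      exact sum_le_sum fun l _ => sum_le_sum fun l' _ => one_le_pow₀ hm

lemma integral_leaveOneOutSum_sq_le (hf : MemLp f 2 μ) (hf1 : ∫ x, f x ∂μ = 1) :
    ∫ ω, leaveOneOutSum f ω ^ 2 ∂(Measure.pi fun _ : ι => μ) ≤
      (∫ x, f x ^ 2 ∂μ) ^ Fintype.card ι * Fintype.card ι ^ 2 := by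
  have hm := one_le_integral_sq_of_integral_eq_one hf hf1
  calc _ ≤ ∑ _l : ι, ∑ _l' : ι, (∫ x, f x ^ 2 ∂μ) ^ Fintype.card ι := by
        rw [integral_leaveOneOutSum_sq hf hf1]
        exact sum_le_sum fun l _ => sum_le_sum fun l' _ => pow_le_pow_right₀ hm (card_le_univ _)
    _ = _ := by simp [sq]; ring

end LeaveOneOut

lemma integral_leaveOneOutSum_gaussian_sq_mem_Icc (L : ℕ) :
    ∫ ω, leaveOneOutSum (ι := Fin L) (fun x => 1 + x / √L) ω ^ 2 ∂stdGaussPi L ∈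
      Set.Icc ((L : ℝ) ^ 2) (Real.exp 1 * L ^ 2) := by
  unfold stdGaussPi
  have hf := memLp_one_add_div_gaussianReal (v := 1) 0 (√L)
  have hf1 := integral_one_add_div_gaussianReal (v := 1) (√L)
  have hm : ∫ x, (1 + x / √L) ^ 2 ∂gaussianReal 0 1 = 1 + (L : ℝ)⁻¹ := by
    rw [integral_one_add_div_sq_gaussianReal, Real.sq_sqrt (Nat.cast_nonneg L)]
    simp
  refine ⟨by simpa using card_sq_le_integral_leaveOneOutSum_sq (ι := Fin L) hf hf1, ?_⟩
  refine (integral_leaveOneOutSum_sq_le hf hf1).trans ?_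
  rw [hm, Fintype.card_fin]
  gcongr
  exact Real.one_add_inv_pow_le_exp

/-- `E[(x₀·∑_{l=1}^{L} ∏_{k≠l}(1 + W_k/√L))²] = Θ(L²)`, and consequently
`E[((η/√L)·∑_{l=1}^{L} ∏_{k≠l}(1 + W_k/√L)·x₀)²] = Θ(η²·L)` for any learning rate `η`. -/
theorem stmt_2 (x₀ : ℝ) (hx₀ : x₀ ≠ 0) :
    ∃ K₁ K₂ : ℝ, 0 < K₁ ∧ K₁ ≤ K₂ ∧ ∃ L₀ : ℕ,
      ∀ L : ℕ, L₀ ≤ L →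
        (K₁ * (L : ℝ) ^ 2 ≤
            ∫ ω, (x₀ * ∑ l, ∏ k ∈ Finset.univ.erase l, (1 + ω k / Real.sqrt L)) ^ 2
              ∂(stdGaussPi L)) ∧
        ((∫ ω, (x₀ * ∑ l, ∏ k ∈ Finset.univ.erase l, (1 + ω k / Real.sqrt L)) ^ 2
              ∂(stdGaussPi L)) ≤ K₂ * (L : ℝ) ^ 2) ∧
        ∀ η : ℝ,
          K₁ * (η ^ 2 * L) ≤
            (∫ ω, ((η / Real.sqrt L) *
                (∑ l, ∏ k ∈ Finset.univ.erase l, (1 + ω k / Real.sqrt L)) * x₀) ^ 2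
              ∂(stdGaussPi L)) ∧
          (∫ ω, ((η / Real.sqrt L) *
                (∑ l, ∏ k ∈ Finset.univ.erase l, (1 + ω k / Real.sqrt L)) * x₀) ^ 2
              ∂(stdGaussPi L)) ≤ K₂ * (η ^ 2 * L) := by
  refine ⟨x₀ ^ 2, Real.exp 1 * x₀ ^ 2, by positivity,
    le_mul_of_one_le_left (sq_nonneg _) (Real.one_le_exp zero_le_one), 1, fun L hL => ?_⟩
  have hLpos : (0 : ℝ) < L := by exact_mod_cast hL
  set I := ∫ ω, leaveOneOutSum (ι := Fin L) (fun x => 1 + x / √L) ω ^ 2 ∂stdGaussPi L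
  obtain ⟨hlo, hhi⟩ := integral_leaveOneOutSum_gaussian_sq_mem_Icc L
  have hfeature : ∫ ω, (x₀ * ∑ l, ∏ k ∈ univ.erase l, (1 + ω k / √L)) ^ 2 ∂stdGaussPi L =
      x₀ ^ 2 * I := by
    simp_rw [mul_pow]
    exact integral_const_mul _ _
  have hstep (η : ℝ) : ∫ ω, ((η / √L) * (∑ l, ∏ k ∈ univ.erase l, (1 + ω k / √L)) * x₀) ^ 2
      ∂stdGaussPi L = η ^ 2 / L * (x₀ ^ 2 * I) := by
    rw [← mul_assoc, ← integral_const_mul]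
    congr with ω
    rw [mul_pow, mul_pow, div_pow, Real.sq_sqrt hLpos.le, leaveOneOutSum]
    ring
  refine ⟨hfeature ▸ by gcongr, hfeature ▸ ?_, fun η => ⟨hstep η ▸ ?_, hstep η ▸ ?_⟩⟩
  · calc x₀ ^ 2 * I ≤ x₀ ^ 2 * (Real.exp 1 * L ^ 2) := by gcongr
      _ = Real.exp 1 * x₀ ^ 2 * L ^ 2 := by ring
  · calc x₀ ^ 2 * (η ^ 2 * L) = η ^ 2 / L * (x₀ ^ 2 * L ^ 2) := by field_simp
      _ ≤ η ^ 2 / L * (x₀ ^ 2 * I) := by gcongr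
  · calc η ^ 2 / L * (x₀ ^ 2 * I) ≤ η ^ 2 / L * (x₀ ^ 2 * (Real.exp 1 * L ^ 2)) := by gcongr
      _ = Real.exp 1 * x₀ ^ 2 * (η ^ 2 * L) := by field_simp
end

section
/- Fix α ≥ 1/2, an integer L ≥ 1 and a constant c₀ > 0. Define c^l := (1 + L^{−2α})^l · c₀ for 0 ≤ l ≤ L, and b¹ := 0, b^{l+1} := L^{−2α} · Σ_{m=1}^{l} (b^m + c^m) for 1 ≤ l ≤ L. Then c₀ ≤ c^l ≤ e·c₀ for all 0 ≤ l ≤ L, and there exist constants 0 < K₁ ≤ K₂ depending only on c₀ (uniform over L and over all α ≥ 1/2) such that K₁ · l · L^{−2α} ≤ b^{l+1} ≤ K₂ · l · L^{−2α} for all 1 ≤ l ≤ L. In particular c^l = Θ(1) and b^{l+1} = Θ(l·L^{−2α}) uniformly. -/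
open Finset

/-- For `α ≥ 1/2`, `L ≥ 1`, `c₀ > 0`, with `c^l = (1 + L^{−2α})^l·c₀` and
`b¹ = 0`, `b^{l+1} = L^{−2α}·∑_{m=1}^{l}(b^m + c^m)`: one has `c₀ ≤ c^l ≤ e·c₀` for all
`0 ≤ l ≤ L`, and there are constants `0 < K₁ ≤ K₂` depending only on `c₀` (uniform over
`L` and over all `α ≥ 1/2`) with `K₁·l·L^{−2α} ≤ b^{l+1} ≤ K₂·l·L^{−2α}` for `1 ≤ l ≤ L`. -/
theorem stmt_7 (c₀ : ℝ) (hc₀ : 0 < c₀) :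
    ∃ K₁ K₂ : ℝ, 0 < K₁ ∧ K₁ ≤ K₂ ∧
      ∀ α : ℝ, 1 / 2 ≤ α → ∀ L : ℕ, 1 ≤ L →
        ∀ b c : ℕ → ℝ,
          (∀ l : ℕ, c l = (1 + (L : ℝ) ^ (-(2 * α))) ^ l * c₀) →
          b 1 = 0 →
          (∀ l : ℕ, 1 ≤ l → l ≤ L →
            b (l + 1) = (L : ℝ) ^ (-(2 * α)) * ∑ m ∈ Finset.Icc 1 l, (b m + c m)) →
          (∀ l : ℕ, l ≤ L → c₀ ≤ c l ∧ c l ≤ Real.exp 1 * c₀) ∧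
          (∀ l : ℕ, 1 ≤ l → l ≤ L →
            K₁ * l * (L : ℝ) ^ (-(2 * α)) ≤ b (l + 1) ∧
            b (l + 1) ≤ K₂ * l * (L : ℝ) ^ (-(2 * α))) := by
  have he1 : (1:ℝ) ≤ Real.exp 1 := by
    have := Real.add_one_le_exp (1:ℝ); linarith
  refine ⟨c₀, 2 * Real.exp 1 * c₀, hc₀, by nlinarith, ?_⟩
  intro α hα L hL b c hc hb1 hbrec
  set ε : ℝ := (L : ℝ) ^ (-(2 * α)) with hεdef
  have hL0 : (0:ℝ) < L := by exact_mod_cast hL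
  have hL1 : (1:ℝ) ≤ L := by exact_mod_cast hL
  have hεpos : 0 < ε := Real.rpow_pos_of_pos hL0 _
  have hεL : ε * L ≤ 1 := by
    have h1 : ε * (L:ℝ) = (L:ℝ) ^ (-(2 * α) + 1) := by
      rw [Real.rpow_add hL0, Real.rpow_one]
    rw [h1]
    exact Real.rpow_le_one_of_one_le_of_nonpos hL1 (by linarith)
  -- bounds on c
  have hcb : ∀ l : ℕ, l ≤ L → c₀ ≤ c l ∧ c l ≤ Real.exp 1 * c₀ := by
    intro l hl
    rw [hc l]
    constructor
    · have h1 : (1:ℝ) ≤ (1 + ε) ^ l := one_le_pow₀ (by linarith)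
      nlinarith
    · have h1 : (1 + ε) ^ l ≤ Real.exp ε ^ l := by
        apply pow_le_pow_left₀ (by linarith)
        have := Real.add_one_le_exp ε; linarith
      have h2 : Real.exp ε ^ l = Real.exp (l * ε) := by
        rw [← Real.exp_nat_mul]
      have h3 : (l:ℝ) * ε ≤ 1 := by
        have hlL : (l:ℝ) ≤ L := by exact_mod_cast hl
        calc (l:ℝ) * ε ≤ (L:ℝ) * ε := by nlinarith
          _ ≤ 1 := by linarith [hεL]
      have h4 : Real.exp ((l:ℝ) * ε) ≤ Real.exp 1 := Real.exp_le_exp.mpr h3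
      nlinarith [pow_nonneg (by linarith : (0:ℝ) ≤ 1 + ε) l]
  -- Gauss sum
  have gauss : ∀ n : ℕ, ∑ m ∈ Icc 1 n, ((m:ℝ) - 1) = n * (n - 1) / 2 := by
    intro n
    induction n with
    | zero => simp
    | succ n ihn =>
      rw [Finset.sum_Icc_succ_top (by omega), ihn]
      push_cast; ring
  -- key induction
  have key : ∀ l : ℕ, 1 ≤ l → l ≤ L + 1 →
      0 ≤ b l ∧ b l ≤ 2 * Real.exp 1 * c₀ * ((l:ℝ) - 1) * ε := by
    intro l
    induction l using Nat.strong_induction_on with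
    | _ l ih =>
      intro h1 h2
      match l, h1 with
      | 1, _ => simp [hb1]
      | (k+2), _ =>
        have hk1 : k + 1 ≤ L := by omega
        have hrec := hbrec (k+1) (by omega) hk1
        have hterm : ∀ m ∈ Icc 1 (k+1),
            0 ≤ b m + c m ∧ b m + c m ≤ 2 * Real.exp 1 * c₀ * ((m:ℝ) - 1) * ε + Real.exp 1 * c₀ := by
          intro m hm
          simp only [Finset.mem_Icc] at hm
          have hmL : m ≤ L := le_trans hm.2 hk1
          have hbm := ih m (by omega) hm.1 (by omega)
          have hcm := hcb m hmL
          exact ⟨by linarith [hbm.1, hcm.1], by linarith [hbm.2, hcm.2]⟩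
        have hsum_nonneg : 0 ≤ ∑ m ∈ Icc 1 (k+1), (b m + c m) :=
          Finset.sum_nonneg fun m hm => (hterm m hm).1
        constructor
        · rw [hrec]; positivity
        · rw [hrec]
          have hsum_le : ∑ m ∈ Icc 1 (k+1), (b m + c m)
              ≤ ∑ m ∈ Icc 1 (k+1), (2 * Real.exp 1 * c₀ * ((m:ℝ) - 1) * ε + Real.exp 1 * c₀) :=
            Finset.sum_le_sum fun m hm => (hterm m hm).2
          have hsum_eq : ∑ m ∈ Icc 1 (k+1), (2 * Real.exp 1 * c₀ * ((m:ℝ) - 1) * ε + Real.exp 1 * c₀)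
              = 2 * Real.exp 1 * c₀ * ε * ((k+1:ℝ) * k / 2) + Real.exp 1 * c₀ * (k+1) := by
            rw [Finset.sum_add_distrib, Finset.sum_const, Nat.card_Icc]
            have : ∑ m ∈ Icc 1 (k+1), (2 * Real.exp 1 * c₀ * ((m:ℝ) - 1) * ε)
                = 2 * Real.exp 1 * c₀ * ε * ∑ m ∈ Icc 1 (k+1), ((m:ℝ) - 1) := by
              rw [Finset.mul_sum]; apply Finset.sum_congr rfl; intros; ring
            rw [this, gauss (k+1)]
            push_cast; ring
          have hεk : ε * (k:ℝ) ≤ 1 := by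
            have : (k:ℝ) ≤ L := by exact_mod_cast le_trans (by omega : k ≤ k + 1) hk1
            nlinarith
          have hfinal : ε * (2 * Real.exp 1 * c₀ * ε * ((k+1:ℝ) * k / 2) + Real.exp 1 * c₀ * (k+1))
              ≤ 2 * Real.exp 1 * c₀ * ((k+2:ℝ) - 1) * ε := by
            have hk0 : (0:ℝ) ≤ k := Nat.cast_nonneg k
            have he0 : (0:ℝ) < Real.exp 1 := Real.exp_pos 1
            nlinarith [mul_nonneg (mul_nonneg (mul_nonneg he0.le hc₀.le) hεpos.le)
              (mul_nonneg (by positivity : (0:ℝ) ≤ (k:ℝ) + 1) (by linarith : (0:ℝ) ≤ 1 - ε * k))]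
          calc ε * ∑ m ∈ Icc 1 (k+1), (b m + c m)
              ≤ ε * (2 * Real.exp 1 * c₀ * ε * ((k+1:ℝ) * k / 2) + Real.exp 1 * c₀ * (k+1)) := by
                apply mul_le_mul_of_nonneg_left _ hεpos.le
                rw [← hsum_eq]; exact hsum_le
            _ ≤ 2 * Real.exp 1 * c₀ * ((k+2:ℝ) - 1) * ε := hfinal
            _ = 2 * Real.exp 1 * c₀ * (((k+2:ℕ):ℝ) - 1) * ε := by push_cast; ring
  refine ⟨hcb, ?_⟩
  intro l hl1 hlL
  constructor
  · rw [hbrec l hl1 hlL]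
    have hsum_ge : (l:ℝ) * c₀ ≤ ∑ m ∈ Icc 1 l, (b m + c m) := by
      have : ∀ m ∈ Icc 1 l, c₀ ≤ b m + c m := by
        intro m hm
        simp only [Finset.mem_Icc] at hm
        have hbm := (key m hm.1 (by omega)).1
        have hcm := (hcb m (le_trans hm.2 hlL)).1
        linarith
      calc (l:ℝ) * c₀ = ∑ _m ∈ Icc 1 l, c₀ := by
            rw [Finset.sum_const, Nat.card_Icc]; push_cast [Nat.add_sub_cancel]; ring
        _ ≤ _ := Finset.sum_le_sum this
    calc c₀ * l * ε ≤ ε * ((l:ℝ) * c₀) := by ring_nf; rfl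
      _ ≤ ε * ∑ m ∈ Icc 1 l, (b m + c m) := by
          apply mul_le_mul_of_nonneg_left hsum_ge hεpos.le
  · have := (key (l+1) (by omega) (by omega)).2
    have hcast : ((l+1:ℕ):ℝ) - 1 = (l:ℝ) := by push_cast; ring
    rw [hcast] at this
    calc b (l+1) ≤ 2 * Real.exp 1 * c₀ * (l:ℝ) * ε := this
      _ = 2 * Real.exp 1 * c₀ * l * ε := by ring
end

section
/- Fix α ≥ 1/2, an integer L ≥ 1 and a constant c₀ > 0. Define c^l := (1 + L^{−2α})^l · c₀ for 0 ≤ l ≤ L, and b¹ := 0, b^{l+1} := L^{−2α} · Σ_{m=1}^{l} (b^m + c^m) for 1 ≤ l ≤ L. Then there exist constants 0 < K₁ ≤ K₂ depending only on c₀ (uniform over L and over all α ≥ 1/2) such that K₁·L ≤ Σ_{m=1}^{L} (b^m + c^m) ≤ K₂·L. Consequently, for every real γ, the quantity L^{−α−γ}·Σ_{m=1}^{L}(b^m + c^m) is Θ(L^{1−α−γ}); it remains bounded as L → ∞ if and only if α + γ ≥ 1, and it is bounded away from zero as L → ∞ if and only if α + γ ≤ 1. -/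
open Finset


lemma sum_closed_form (c₀ α : ℝ) (b c : ℕ → ℕ → ℝ) (L : ℕ)
    (hc : ∀ l : ℕ, c L l = (1 + (L : ℝ) ^ (-(2 * α))) ^ l * c₀)
    (hb1 : b L 1 = 0)
    (hbrec : ∀ l : ℕ, 1 ≤ l → l ≤ L →
      b L (l + 1) = (L : ℝ) ^ (-(2 * α)) * ∑ m ∈ Finset.Icc 1 l, (b L m + c L m)) :
    ∀ l : ℕ, 1 ≤ l → l ≤ L →
      ∑ m ∈ Finset.Icc 1 l, (b L m + c L m)
        = l * (1 + (L : ℝ) ^ (-(2 * α))) ^ l * c₀ := by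
  intro l hl
  induction l, hl using Nat.le_induction with
  | base =>
    intro _
    simp [hc, hb1]
  | succ n hn ih =>
    intro hnL
    rw [Finset.sum_Icc_succ_top (by omega : 1 ≤ n + 1),
      ih (by omega), hbrec n hn (by omega), ih (by omega), hc]
    push_cast
    ring

lemma growth_bound (α : ℝ) (hα : 1 / 2 ≤ α) (L : ℕ) (hL : 1 ≤ L) :
    1 ≤ (1 + (L : ℝ) ^ (-(2 * α))) ^ L ∧ (1 + (L : ℝ) ^ (-(2 * α))) ^ L ≤ 3 := by
  have hL1 : (1 : ℝ) ≤ (L : ℝ) := by exact_mod_cast hL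
  have hL0 : (0 : ℝ) < (L : ℝ) := by linarith
  set t : ℝ := (L : ℝ) ^ (-(2 * α)) with ht
  have ht0 : 0 < t := Real.rpow_pos_of_pos hL0 _
  have htle : t ≤ 1 / L := by
    have : (L : ℝ) ^ (-(2 * α)) ≤ (L : ℝ) ^ (-1 : ℝ) :=
      Real.rpow_le_rpow_of_exponent_le hL1 (by linarith)
    rwa [Real.rpow_neg_one, ← one_div] at this
  constructor
  · exact one_le_pow₀ (by linarith)
  · have h1 : (1 + t) ^ L ≤ Real.exp t ^ L := by
      apply pow_le_pow_left₀ (by linarith)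
      linarith [Real.add_one_le_exp t]
    have h2 : Real.exp t ^ L = Real.exp (L * t) := by
      rw [← Real.exp_nat_mul]
    have h3 : (L : ℝ) * t ≤ 1 := by
      have := mul_le_mul_of_nonneg_left htle (le_of_lt hL0)
      rwa [mul_one_div, div_self (ne_of_gt hL0)] at this
    have h4 : Real.exp ((L : ℝ) * t) ≤ Real.exp 1 := Real.exp_le_exp.mpr h3
    have h5 : Real.exp 1 ≤ 3 := le_of_lt (by
      calc Real.exp 1 < 2.7182818286 := Real.exp_one_lt_d9
      _ ≤ 3 := by norm_num)
    calc (1 + t) ^ L ≤ Real.exp t ^ L := h1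
      _ = Real.exp ((L : ℝ) * t) := h2
      _ ≤ 3 := le_trans h4 h5

/-- For `α ≥ 1/2`, `c₀ > 0`, with (for each depth `L`)
`c_L^l = (1 + L^{−2α})^l·c₀`, `b_L¹ = 0`, `b_L^{l+1} = L^{−2α}·∑_{m=1}^{l}(b_L^m + c_L^m)`:
there are constants `0 < K₁ ≤ K₂` depending only on `c₀` (uniform over `L` and `α ≥ 1/2`)
with `K₁·L ≤ ∑_{m=1}^{L}(b_L^m + c_L^m) ≤ K₂·L`.  Consequently, for every real `γ`,
`L^{−α−γ}·∑_{m=1}^{L}(b_L^m + c_L^m) = Θ(L^{1−α−γ})`; it remains bounded as `L → ∞` iff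
`α + γ ≥ 1`, and it is bounded away from zero as `L → ∞` iff `α + γ ≤ 1`. -/
theorem stmt_8 (c₀ : ℝ) (hc₀ : 0 < c₀) :
    ∃ K₁ K₂ : ℝ, 0 < K₁ ∧ K₁ ≤ K₂ ∧
      ∀ α : ℝ, 1 / 2 ≤ α →
        ∀ b c : ℕ → ℕ → ℝ,
          (∀ L l : ℕ, c L l = (1 + (L : ℝ) ^ (-(2 * α))) ^ l * c₀) →
          (∀ L : ℕ, b L 1 = 0) →
          (∀ L : ℕ, 1 ≤ L → ∀ l : ℕ, 1 ≤ l → l ≤ L →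
            b L (l + 1) = (L : ℝ) ^ (-(2 * α)) * ∑ m ∈ Finset.Icc 1 l, (b L m + c L m)) →
          (∀ L : ℕ, 1 ≤ L →
            K₁ * L ≤ (∑ m ∈ Finset.Icc 1 L, (b L m + c L m)) ∧
            (∑ m ∈ Finset.Icc 1 L, (b L m + c L m)) ≤ K₂ * L) ∧
          ∀ γ : ℝ,
            (∀ L : ℕ, 1 ≤ L →
              K₁ * (L : ℝ) ^ (1 - α - γ) ≤
                (L : ℝ) ^ (-α - γ) * ∑ m ∈ Finset.Icc 1 L, (b L m + c L m) ∧
              (L : ℝ) ^ (-α - γ) * (∑ m ∈ Finset.Icc 1 L, (b L m + c L m)) ≤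
                K₂ * (L : ℝ) ^ (1 - α - γ)) ∧
            ((∃ M : ℝ, ∀ L : ℕ, 1 ≤ L →
                (L : ℝ) ^ (-α - γ) * (∑ m ∈ Finset.Icc 1 L, (b L m + c L m)) ≤ M) ↔
              1 ≤ α + γ) ∧
            ((∃ ε : ℝ, 0 < ε ∧ ∃ L₀ : ℕ, ∀ L : ℕ, L₀ ≤ L →
                ε ≤ (L : ℝ) ^ (-α - γ) * ∑ m ∈ Finset.Icc 1 L, (b L m + c L m)) ↔
              α + γ ≤ 1) := by
  refine ⟨c₀, 3 * c₀, hc₀, by linarith, ?_⟩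
  intro α hα b c hc hb1 hbrec
  -- the core bounds
  have hbd : ∀ L : ℕ, 1 ≤ L →
      c₀ * L ≤ (∑ m ∈ Finset.Icc 1 L, (b L m + c L m)) ∧
      (∑ m ∈ Finset.Icc 1 L, (b L m + c L m)) ≤ 3 * c₀ * L := by
    intro L hL
    have hform := sum_closed_form c₀ α b c L (hc L) (hb1 L) (hbrec L hL) L hL le_rfl
    obtain ⟨hg1, hg3⟩ := growth_bound α hα L hL
    have hL0 : (0 : ℝ) < (L : ℝ) := by exact_mod_cast hL
    rw [hform]
    constructor
    · have h := mul_le_mul_of_nonneg_left hg1 hL0.le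
      nlinarith
    · have h := mul_le_mul_of_nonneg_left hg3 hL0.le
      nlinarith
  refine ⟨hbd, ?_⟩
  intro γ
  -- rpow bounds
  have hrb : ∀ L : ℕ, 1 ≤ L →
      c₀ * (L : ℝ) ^ (1 - α - γ) ≤
        (L : ℝ) ^ (-α - γ) * ∑ m ∈ Finset.Icc 1 L, (b L m + c L m) ∧
      (L : ℝ) ^ (-α - γ) * (∑ m ∈ Finset.Icc 1 L, (b L m + c L m)) ≤
        3 * c₀ * (L : ℝ) ^ (1 - α - γ) := by
    intro L hL
    have hL0 : (0 : ℝ) < (L : ℝ) := by exact_mod_cast hL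
    have hr0 : 0 < (L : ℝ) ^ (-α - γ) := Real.rpow_pos_of_pos hL0 _
    have hsplit : (L : ℝ) ^ (1 - α - γ) = (L : ℝ) ^ (-α - γ) * L := by
      rw [show (1 : ℝ) - α - γ = (-α - γ) + 1 by ring, Real.rpow_add hL0, Real.rpow_one]
    obtain ⟨h1, h2⟩ := hbd L hL
    constructor
    · calc c₀ * (L : ℝ) ^ (1 - α - γ) = (L : ℝ) ^ (-α - γ) * (c₀ * L) := by
            rw [hsplit]; ring
        _ ≤ _ := mul_le_mul_of_nonneg_left h1 (le_of_lt hr0)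
    · calc (L : ℝ) ^ (-α - γ) * (∑ m ∈ Finset.Icc 1 L, (b L m + c L m))
            ≤ (L : ℝ) ^ (-α - γ) * (3 * c₀ * L) := mul_le_mul_of_nonneg_left h2 (le_of_lt hr0)
        _ = 3 * c₀ * (L : ℝ) ^ (1 - α - γ) := by rw [hsplit]; ring
  refine ⟨hrb, ?_, ?_⟩
  · constructor
    · rintro ⟨M, hM⟩
      by_contra hcon
      push_neg at hcon
      set δ : ℝ := 1 - α - γ with hδ
      have hδ0 : 0 < δ := by simp only [hδ]; linarith
      have htend : Filter.Tendsto (fun L : ℕ => ((L : ℝ)) ^ δ) Filter.atTop Filter.atTop :=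
        (tendsto_rpow_atTop hδ0).comp tendsto_natCast_atTop_atTop
      obtain ⟨L, hLbig, hL1⟩ :=
        ((htend.eventually_ge_atTop (M / c₀ + 1)).and (Filter.eventually_ge_atTop 1)).exists
      have h := le_trans (hrb L hL1).1 (hM L hL1)
      have hd : c₀ * (L : ℝ) ^ δ ≤ M := h
      have : (L : ℝ) ^ δ ≤ M / c₀ := (le_div_iff₀' hc₀).mpr hd
      linarith
    · intro h
      refine ⟨3 * c₀, fun L hL => ?_⟩
      have hL1 : (1 : ℝ) ≤ (L : ℝ) := by exact_mod_cast hL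
      have : (L : ℝ) ^ (1 - α - γ) ≤ 1 :=
        Real.rpow_le_one_of_one_le_of_nonpos hL1 (by linarith)
      have := (hrb L hL).2
      nlinarith
  · constructor
    · rintro ⟨ε, hε, L₀, hL₀⟩
      by_contra hcon
      push_neg at hcon
      set δ : ℝ := α + γ - 1 with hδ
      have hδ0 : 0 < δ := by simp only [hδ]; linarith
      have htend : Filter.Tendsto (fun L : ℕ => ((L : ℝ)) ^ (-δ)) Filter.atTop (nhds 0) :=
        (tendsto_rpow_neg_atTop hδ0).comp tendsto_natCast_atTop_atTop
      have hev : ∀ᶠ L : ℕ in Filter.atTop, ((L : ℝ)) ^ (-δ) < ε / (3 * c₀) :=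
        htend.eventually_lt_const (by positivity)
      obtain ⟨L, hsmall, hLge, hL1⟩ :=
        (hev.and ((Filter.eventually_ge_atTop L₀).and (Filter.eventually_ge_atTop 1))).exists
      have hub := (hrb L hL1).2
      have hlb := hL₀ L hLge
      have heq : (1 : ℝ) - α - γ = -δ := by simp only [hδ]; ring
      rw [heq] at hub
      have : 3 * c₀ * ((L : ℝ)) ^ (-δ) < 3 * c₀ * (ε / (3 * c₀)) :=
        mul_lt_mul_of_pos_left hsmall (by positivity)
      rw [mul_div_cancel₀ _ (by positivity : (3 : ℝ) * c₀ ≠ 0)] at this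
      linarith
    · intro h
      refine ⟨c₀, hc₀, 1, fun L hL => ?_⟩
      have hL1 : (1 : ℝ) ≤ (L : ℝ) := by exact_mod_cast hL
      have h1 : (1 : ℝ) ≤ (L : ℝ) ^ (1 - α - γ) :=
        Real.one_le_rpow hL1 (by linarith)
      have := (hrb L hL).1
      nlinarith
end

section
/- Fix α ≥ 1/2, an integer L ≥ 1 and a constant c₀ > 0. Define c^l := (1 + L^{−2α})^l · c₀ for 0 ≤ l ≤ L, and b¹ := 0, b^{l+1} := L^{−2α} · Σ_{m=1}^{l} (b^m + c^m) for 1 ≤ l ≤ L. Then there exists a constant K₂ > 0 depending only on c₀ (uniform over L and all α ≥ 1/2) such that for every ε ∈ (0,1] with εL an integer and every integer 0 ≤ l ≤ L − εL: c₀·ε ≤ L^{−1} · Σ_{m=l+1}^{l+εL} (b^m + c^m) ≤ K₂·ε. -/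
open Finset

/-- For `α ≥ 1/2`, `L ≥ 1`, `c₀ > 0`, with `c^l = (1 + L^{−2α})^l·c₀`,
`b¹ = 0`, `b^{l+1} = L^{−2α}·∑_{m=1}^{l}(b^m + c^m)`: there is a constant `K₂ > 0`
depending only on `c₀` (uniform over `L` and all `α ≥ 1/2`) such that for every
`ε ∈ (0,1]` with `εL` an integer and every integer `0 ≤ l ≤ L − εL`,
`c₀·ε ≤ L^{−1}·∑_{m=l+1}^{l+εL}(b^m + c^m) ≤ K₂·ε`. -/
theorem stmt_9 (c₀ : ℝ) (hc₀ : 0 < c₀) :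
    ∃ K₂ : ℝ, 0 < K₂ ∧
      ∀ α : ℝ, 1 / 2 ≤ α → ∀ L : ℕ, 1 ≤ L →
        ∀ b c : ℕ → ℝ,
          (∀ l : ℕ, c l = (1 + (L : ℝ) ^ (-(2 * α))) ^ l * c₀) →
          b 1 = 0 →
          (∀ l : ℕ, 1 ≤ l → l ≤ L →
            b (l + 1) = (L : ℝ) ^ (-(2 * α)) * ∑ m ∈ Finset.Icc 1 l, (b m + c m)) →
          ∀ ε : ℝ, 0 < ε → ε ≤ 1 → ∀ E : ℕ, (E : ℝ) = ε * L →
            ∀ l : ℕ, l + E ≤ L →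
              c₀ * ε ≤ (L : ℝ)⁻¹ * (∑ m ∈ Finset.Icc (l + 1) (l + E), (b m + c m)) ∧
              (L : ℝ)⁻¹ * (∑ m ∈ Finset.Icc (l + 1) (l + E), (b m + c m)) ≤ K₂ * ε := by
  refine ⟨6 * c₀, by positivity, ?_⟩
  intro α hα L hL b c hc hb1 hb ε hε hε1 E hE l hlE
  set t : ℝ := (L : ℝ) ^ (-(2 * α)) with ht
  have hLpos : (0:ℝ) < L := by exact_mod_cast hL
  have hL1 : (1:ℝ) ≤ L := by exact_mod_cast hL
  have ht0 : 0 < t := Real.rpow_pos_of_pos hLpos _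
  have htL : t ≤ (L:ℝ)⁻¹ := by
    have h : (L:ℝ) ^ (-(2*α)) ≤ (L:ℝ) ^ (-1 : ℝ) := by
      apply Real.rpow_le_rpow_of_exponent_le hL1
      linarith
    rw [Real.rpow_neg_one] at h
    exact h
  have htLe : (L:ℝ) * t ≤ 1 := by
    calc (L:ℝ) * t ≤ (L:ℝ) * (L:ℝ)⁻¹ := by
          exact mul_le_mul_of_nonneg_left htL (le_of_lt hLpos)
      _ = 1 := mul_inv_cancel₀ (ne_of_gt hLpos)
  -- closed form for partial sums
  have key : ∀ n : ℕ, n ≤ L →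
      (∑ m ∈ Finset.Icc 1 n, (b m + c m)) = n * (1 + t) ^ n * c₀ := by
    intro n
    induction n with
    | zero => intro _; simp
    | succ k ih =>
      intro hk
      have hk' : k ≤ L := by omega
      have hsum : (∑ m ∈ Finset.Icc 1 (k+1), (b m + c m))
          = (∑ m ∈ Finset.Icc 1 k, (b m + c m)) + (b (k+1) + c (k+1)) := by
        rw [← Finset.sum_Icc_succ_top (by omega : 1 ≤ k + 1)]
      rcases Nat.eq_zero_or_pos k with hk0 | hkpos
      · subst hk0
        rw [hsum, hb1, hc 1]
        simp
      · have hbk := hb k hkpos hk'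
        rw [hsum, ih hk', hbk, ih hk', hc (k+1)]
        push_cast
        ring
  -- term formula
  have hterm : ∀ n : ℕ, n + 1 ≤ L →
      b (n+1) + c (n+1) = (1 + ((n:ℝ)+1) * t) * (1 + t) ^ n * c₀ := by
    intro n hmL
    have h1 := key (n+1) hmL
    have h2 := key n (by omega)
    have hs : (∑ x ∈ Finset.Icc 1 (n+1), (b x + c x))
        = (∑ x ∈ Finset.Icc 1 n, (b x + c x)) + (b (n+1) + c (n+1)) := by
      rw [← Finset.sum_Icc_succ_top (by omega : 1 ≤ n + 1)]
    have h3 : b (n+1) + c (n+1)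
        = ((n:ℕ)+1 : ℕ) * (1 + t) ^ (n+1) * c₀ - (n:ℕ) * (1 + t) ^ n * c₀ := by
      rw [← h1, hs, h2]; ring
    rw [h3]
    push_cast
    ring
  -- per-term bounds
  have hbnd : ∀ n : ℕ, n + 1 ≤ L →
      c₀ ≤ b (n+1) + c (n+1) ∧ b (n+1) + c (n+1) ≤ 6 * c₀ := by
    intro n hnL
    rw [hterm n hnL]
    have hnR : ((n:ℝ) + 1) ≤ (L:ℝ) := by exact_mod_cast hnL
    have hp1 : (1:ℝ) ≤ (1 + t) ^ n := one_le_pow₀ (by linarith)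
    have hf1 : (1:ℝ) ≤ 1 + ((n:ℝ)+1) * t := by
      have : (0:ℝ) ≤ ((n:ℝ)+1) * t := by positivity
      linarith
    constructor
    · calc c₀ = 1 * 1 * c₀ := by ring
        _ ≤ (1 + ((n:ℝ)+1) * t) * (1 + t) ^ n * c₀ := by
          apply mul_le_mul_of_nonneg_right _ (le_of_lt hc₀)
          exact mul_le_mul hf1 hp1 (by norm_num) (by linarith)
    · have hf2 : 1 + ((n:ℝ)+1) * t ≤ 2 := by
        have : ((n:ℝ)+1) * t ≤ (L:ℝ) * t :=
          mul_le_mul_of_nonneg_right hnR (le_of_lt ht0)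
        linarith
      have hp3 : (1 + t) ^ n ≤ 3 := by
        have h1 : (1 + t) ^ n ≤ Real.exp t ^ n := by
          apply pow_le_pow_left₀ (by linarith)
          have := Real.add_one_le_exp t
          linarith
        have h2 : Real.exp t ^ n = Real.exp ((n:ℝ) * t) := by
          rw [← Real.exp_nat_mul]
        have h3 : (n:ℝ) * t ≤ 1 := by
          have hn : (n:ℝ) ≤ (L:ℝ) := by linarith
          have : (n:ℝ) * t ≤ (L:ℝ) * t := mul_le_mul_of_nonneg_right hn (le_of_lt ht0)
          linarith
        have h4 : Real.exp ((n:ℝ) * t) ≤ Real.exp 1 := Real.exp_le_exp.mpr h3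
        have h5 : Real.exp 1 ≤ 3 := by
          have := Real.exp_one_lt_d9
          linarith
        calc (1 + t) ^ n ≤ Real.exp ((n:ℝ) * t) := by rw [← h2]; exact h1
          _ ≤ 3 := le_trans h4 h5
      calc (1 + ((n:ℝ)+1) * t) * (1 + t) ^ n * c₀ ≤ 2 * 3 * c₀ := by
            apply mul_le_mul_of_nonneg_right _ (le_of_lt hc₀)
            exact mul_le_mul hf2 hp3 (by positivity) (by norm_num)
        _ = 6 * c₀ := by ring
  -- sum bounds
  have hcard : (Finset.Icc (l+1) (l+E)).card = E := by
    rw [Nat.card_Icc]; omega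
  have hsumlow : (E:ℝ) * c₀ ≤ ∑ m ∈ Finset.Icc (l+1) (l+E), (b m + c m) := by
    have := Finset.card_nsmul_le_sum (Finset.Icc (l+1) (l+E)) (fun m => b m + c m) c₀
      (fun m hm => by
        simp only [Finset.mem_Icc] at hm
        obtain ⟨n, rfl⟩ : ∃ n, m = n + 1 := ⟨m - 1, by omega⟩
        exact (hbnd n (by omega)).1)
    rw [hcard] at this
    simpa [nsmul_eq_mul] using this
  have hsumhigh : (∑ m ∈ Finset.Icc (l+1) (l+E), (b m + c m)) ≤ (E:ℝ) * (6 * c₀) := by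
    have := Finset.sum_le_card_nsmul (Finset.Icc (l+1) (l+E)) (fun m => b m + c m) (6 * c₀)
      (fun m hm => by
        simp only [Finset.mem_Icc] at hm
        obtain ⟨n, rfl⟩ : ∃ n, m = n + 1 := ⟨m - 1, by omega⟩
        exact (hbnd n (by omega)).2)
    rw [hcard] at this
    simpa [nsmul_eq_mul] using this
  have hLinv : (0:ℝ) < (L:ℝ)⁻¹ := by positivity
  have hEL : (L:ℝ)⁻¹ * (E:ℝ) = ε := by
    rw [hE]; field_simp
  constructor
  · calc c₀ * ε = (L:ℝ)⁻¹ * ((E:ℝ) * c₀) := by rw [← hEL]; ring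
      _ ≤ _ := mul_le_mul_of_nonneg_left hsumlow (le_of_lt hLinv)
  · calc (L:ℝ)⁻¹ * (∑ m ∈ Finset.Icc (l+1) (l+E), (b m + c m))
        ≤ (L:ℝ)⁻¹ * ((E:ℝ) * (6 * c₀)) := mul_le_mul_of_nonneg_left hsumhigh (le_of_lt hLinv)
      _ = 6 * c₀ * ε := by rw [← hEL]; ring
end
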